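/- Let V = { (x₁,x₂,x₃,x₄,x₅,x,y) ∈ ℝ⁷ : x₄ ≠ 0 and x₅ ≠ 0 }. The map h(x₁,x₂,x₃,x₄,x₅,x,y) = (x₁, x₂x₄, x₃, x₄, x₅/x₄, x, y) restricts to a homeomorphism of V onto itself, and for every c ∈ ℝ and every pair of signs ε, δ ∈ {+1,−1}, h maps the set { v ∈ V : x₂ − x₃x₄/x₅ = c, εx₄ > 0, δx₅ > 0 } bijectively onto the set { v ∈ V : x₂/x₄ − x₃/x₅ = c, εx₄ > 0, εδx₅ > 0 }. (Hence h is a topological equivalence between the foliation of V by the leaves of the first family and the foliation of V by the leaves of the second family.) -/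
import Mathlib


noncomputable section

/-- The foliated manifold `V = {x₄ ≠ 0, x₅ ≠ 0} ⊆ ℝ⁷` (coordinates
`(x₁,…,x₅,x,y)` indexed by `0,…,6`). -/
def V : Set (Fin 7 → ℝ) := {v | v 3 ≠ 0 ∧ v 4 ≠ 0}

/-- The map `h(x₁,x₂,x₃,x₄,x₅,x,y) = (x₁, x₂x₄, x₃, x₄, x₅/x₄, x, y)`. -/
def h (v : Fin 7 → ℝ) : Fin 7 → ℝ := ![v 0, v 1 * v 3, v 2, v 3, v 4 / v 3, v 5, v 6]

/-- Inverse map of `h` on `V`. -/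
def ginv (v : Fin 7 → ℝ) : Fin 7 → ℝ := ![v 0, v 1 / v 3, v 2, v 3, v 4 * v 3, v 5, v 6]

lemma ginv_h (v : Fin 7 → ℝ) (hv : v 3 ≠ 0) : ginv (h v) = v := by
  funext i
  fin_cases i
  · rfl
  · show v 1 * v 3 / v 3 = v 1; field_simp
  · rfl
  · rfl
  · show v 4 / v 3 * v 3 = v 4; field_simp
  · rfl
  · rfl

lemma h_ginv (v : Fin 7 → ℝ) (hv : v 3 ≠ 0) : h (ginv v) = v := by
  funext i
  fin_cases i
  · rfl
  · show v 1 / v 3 * v 3 = v 1; field_simp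
  · rfl
  · rfl
  · show v 4 * v 3 / v 3 = v 4; field_simp
  · rfl
  · rfl

lemma h_mem_V {v : Fin 7 → ℝ} (hv : v ∈ V) : h v ∈ V := by
  obtain ⟨h3, h4⟩ := hv
  exact ⟨by simpa [h] using h3, by simp [h]; exact ⟨h4, h3⟩⟩

lemma ginv_mem_V {v : Fin 7 → ℝ} (hv : v ∈ V) : ginv v ∈ V := by
  obtain ⟨h3, h4⟩ := hv
  exact ⟨by simpa [ginv] using h3, by simp [ginv]; exact ⟨h4, h3⟩⟩

/-- `h` as a homeomorphism of `V`. -/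
def Hhomeo : V ≃ₜ V where
  toFun v := ⟨h v, h_mem_V v.2⟩
  invFun v := ⟨ginv v, ginv_mem_V v.2⟩
  left_inv v := Subtype.ext (ginv_h v v.2.1)
  right_inv v := Subtype.ext (h_ginv v v.2.1)
  continuous_toFun := by
    apply Continuous.subtype_mk
    apply continuous_pi
    intro i
    have c3 : Continuous fun v : V => (v : Fin 7 → ℝ) 3 :=
      (continuous_apply 3).comp continuous_subtype_val
    have c4 : Continuous fun v : V => (v : Fin 7 → ℝ) 4 :=
      (continuous_apply 4).comp continuous_subtype_val
    fin_cases i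
    · show Continuous fun v : V => (v : Fin 7 → ℝ) 0
      exact (continuous_apply (0 : Fin 7)).comp continuous_subtype_val
    · show Continuous fun v : V => (v : Fin 7 → ℝ) 1 * (v : Fin 7 → ℝ) 3
      exact ((continuous_apply 1).comp continuous_subtype_val).mul c3
    · show Continuous fun v : V => (v : Fin 7 → ℝ) 2
      exact (continuous_apply (2 : Fin 7)).comp continuous_subtype_val
    · exact c3
    · show Continuous fun v : V => (v : Fin 7 → ℝ) 4 / (v : Fin 7 → ℝ) 3
      exact c4.div c3 fun v => v.2.1
    · show Continuous fun v : V => (v : Fin 7 → ℝ) 5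
      exact (continuous_apply (5 : Fin 7)).comp continuous_subtype_val
    · show Continuous fun v : V => (v : Fin 7 → ℝ) 6
      exact (continuous_apply (6 : Fin 7)).comp continuous_subtype_val
  continuous_invFun := by
    apply Continuous.subtype_mk
    apply continuous_pi
    intro i
    have c3 : Continuous fun v : V => (v : Fin 7 → ℝ) 3 :=
      (continuous_apply 3).comp continuous_subtype_val
    have c4 : Continuous fun v : V => (v : Fin 7 → ℝ) 4 :=
      (continuous_apply 4).comp continuous_subtype_val
    fin_cases i
    · show Continuous fun v : V => (v : Fin 7 → ℝ) 0
      exact (continuous_apply (0 : Fin 7)).comp continuous_subtype_val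
    · show Continuous fun v : V => (v : Fin 7 → ℝ) 1 / (v : Fin 7 → ℝ) 3
      exact ((continuous_apply 1).comp continuous_subtype_val).div c3 fun v => v.2.1
    · show Continuous fun v : V => (v : Fin 7 → ℝ) 2
      exact (continuous_apply (2 : Fin 7)).comp continuous_subtype_val
    · exact c3
    · show Continuous fun v : V => (v : Fin 7 → ℝ) 4 * (v : Fin 7 → ℝ) 3
      exact c4.mul c3
    · show Continuous fun v : V => (v : Fin 7 → ℝ) 5
      exact (continuous_apply (5 : Fin 7)).comp continuous_subtype_val
    · show Continuous fun v : V => (v : Fin 7 → ℝ) 6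
      exact (continuous_apply (6 : Fin 7)).comp continuous_subtype_val

/-- `h` restricts to a homeomorphism of `V` onto itself, and it maps each leaf
`{x₂ − x₃x₄/x₅ = c, εx₄ > 0, δx₅ > 0}` of the G₂-foliation bijectively onto the
leaf `{x₂/x₄ − x₃/x₅ = c, εx₄ > 0, εδx₅ > 0}` of the G₃-foliation. -/
theorem h_topological_equivalence :
    (∃ H : V ≃ₜ V, ∀ v : V, (H v : Fin 7 → ℝ) = h v) ∧
    ∀ (c ε δ : ℝ), (ε = 1 ∨ ε = -1) → (δ = 1 ∨ δ = -1) →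
      Set.BijOn h
        {v ∈ V | v 1 - v 2 * v 3 / v 4 = c ∧ ε * v 3 > 0 ∧ δ * v 4 > 0}
        {v ∈ V | v 1 / v 3 - v 2 / v 4 = c ∧ ε * v 3 > 0 ∧ (ε * δ) * v 4 > 0} := by
  constructor
  · exact ⟨Hhomeo, fun v => rfl⟩
  intro c ε δ hε hδ
  have hε2 : ε ^ 2 = 1 := by rcases hε with h | h <;> rw [h] <;> ring
  refine ⟨?_, ?_, ?_⟩
  · rintro v ⟨⟨h3, h4⟩, hc, hε3, hδ4⟩
    refine ⟨h_mem_V ⟨h3, h4⟩, ?_, ?_, ?_⟩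
    · show v 1 * v 3 / v 3 - v 2 / (v 4 / v 3) = c
      rw [← hc]; field_simp
    · simpa [h] using hε3
    · show ε * δ * (v 4 / v 3) > 0
      have : ε * δ * (v 4 / v 3) = (δ * v 4) * (ε * v 3) / v 3 ^ 2 := by
        field_simp
      rw [this]
      positivity
  · rintro v ⟨⟨h3, _⟩, _⟩ w ⟨⟨w3, _⟩, _⟩ hvw
    calc v = ginv (h v) := (ginv_h v h3).symm
    _ = ginv (h w) := by rw [hvw]
    _ = w := ginv_h w w3
  · rintro w ⟨⟨w3, w4⟩, hc, hε3, hεδ4⟩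
    refine ⟨ginv w, ⟨ginv_mem_V ⟨w3, w4⟩, ?_, ?_, ?_⟩, h_ginv w w3⟩
    · show w 1 / w 3 - w 2 * w 3 / (w 4 * w 3) = c
      rw [← hc]; field_simp
    · simpa [ginv] using hε3
    · show δ * (w 4 * w 3) > 0
      obtain rfl | rfl := hε <;> nlinarith [mul_pos hεδ4 hε3]

end
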